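/- arXiv:1911.04223 — 2 statements merged into one kernel-verified Lean document; each statement's English description precedes it below -/
import Mathlib

section
/- With ψ the increasing fundamental solution of the OU equation (σ²/2)u'' + κ(μ−x)u' − ρu = 0, define Q_k(z) = ψ^{(k)}(z)ψ^{(k+2)}(z) − (ψ^{(k+1)}(z))². Then Q_k(z) > 0 for every z ∈ ℝ and every k ∈ ℕ₀. -/
/-!
Substituting the integral representation of `D_{-a}`, `a = ρ / κ`, into `ψ`, the Gaussian
prefactors cancel: `ψ(x) = Γ(a)⁻¹ M(c (x - μ))` with `c = √(2κ) / σ` and `M` the moment generating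
function of the measure `ν = t^(a-1) e^{-t²/2} dt` on `(0, ∞)`. Hence
`ψ^{(k)}(x) = Γ(a)⁻¹ c^k ∫ t^k e^{Bt} dν` with `B = c (x - μ)`, and `Q_k > 0` is the
Cauchy–Schwarz inequality `(∫ t f dν)² ≤ (∫ f dν)(∫ t² f dν)` for the positive weight
`f = t^k e^{Bt}`, which is strict because `ν` has no atoms.
-/

open Set

/-- Parabolic cylinder function `D_α(x)` for `α < 0` (integral representation). -/
noncomputable def Dcyl (α x : ℝ) : ℝ :=
  Real.exp (-x ^ 2 / 4) / Real.Gamma (-α) *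
    ∫ t in Ioi (0 : ℝ), t ^ (-α - 1) * Real.exp (-t ^ 2 / 2 - x * t)

/-- Increasing fundamental solution of `(σ²/2)u'' + κ(μ−x)u' − ρu = 0`. -/
noncomputable def psi (κ μ σ ρ : ℝ) (x : ℝ) : ℝ :=
  Real.exp (κ * (x - μ) ^ 2 / (2 * σ ^ 2)) *
    Dcyl (-(ρ / κ)) (-((x - μ) / σ) * Real.sqrt (2 * κ))

/-- Decreasing fundamental solution of `(σ²/2)u'' + κ(μ−x)u' − ρu = 0`. -/
noncomputable def phi (κ μ σ ρ : ℝ) (x : ℝ) : ℝ :=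
  Real.exp (κ * (x - μ) ^ 2 / (2 * σ ^ 2)) *
    Dcyl (-(ρ / κ)) (((x - μ) / σ) * Real.sqrt (2 * κ))

open MeasureTheory ProbabilityTheory Real

theorem integral_pos_of_ae_pos {α : Type*} [MeasurableSpace α] {ν : Measure α} (hν : ν ≠ 0)
    {g : α → ℝ} (hg : Integrable g ν) (hpos : ∀ᵐ x ∂ν, 0 < g x) : 0 < ∫ x, g x ∂ν := by
  rw [integral_pos_iff_support_of_nonneg_ae (hpos.mono fun _ => le_of_lt) hg]
  have hfull : Function.support g =ᵐ[ν] univ :=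
    ae_eq_univ.2 (ae_iff.1 (hpos.mono fun _ hx => hx.ne'))
  rw [measure_congr hfull]
  exact Measure.measure_univ_pos.2 hν

/-- The quadratic `r ↦ ∫ (t - r)² f` is positive, so its discriminant is negative. -/
theorem sq_integral_mul_lt_integral_mul_integral {ν : Measure ℝ} [NullSingletonClass ν]
    (hν : ν ≠ 0) {f : ℝ → ℝ} (hf : ∀ᵐ t ∂ν, 0 < f t) (h0 : Integrable f ν)
    (h1 : Integrable (fun t => t * f t) ν) (h2 : Integrable (fun t => t ^ 2 * f t) ν) :
    (∫ t, t * f t ∂ν) ^ 2 < (∫ t, f t ∂ν) * ∫ t, t ^ 2 * f t ∂ν := by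
  have hquad (r : ℝ) : 0 < (∫ t, f t ∂ν) * (r * r) + (-2 * ∫ t, t * f t ∂ν) * r
      + ∫ t, t ^ 2 * f t ∂ν := by
    have h21 : Integrable (fun t => t ^ 2 * f t - 2 * r * (t * f t)) ν := h2.sub (h1.const_mul _)
    have hexpand : (fun t => (t - r) ^ 2 * f t) =
        fun t => t ^ 2 * f t - 2 * r * (t * f t) + r ^ 2 * f t := by
      funext t; ring
    calc 0 < ∫ t, (t - r) ^ 2 * f t ∂ν := by
          refine integral_pos_of_ae_pos hν (hexpand ▸ h21.add (h0.const_mul _)) ?_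
          filter_upwards [hf, Measure.ae_ne ν r] with t ht htr
          have := sub_ne_zero.2 htr
          positivity
      _ = _ := by
          rw [hexpand, integral_add h21 (h0.const_mul _), integral_sub h2 (h1.const_mul _),
            integral_const_mul, integral_const_mul]
          ring
  have := discrim_lt_zero (integral_pos_of_ae_pos hν h0 hf).ne' hquad
  rw [discrim] at this
  nlinarith

theorem contDiff_mgf {Ω : Type*} [MeasurableSpace Ω] {μ : Measure Ω} {X : Ω → ℝ}
    (h : integrableExpSet X μ = univ) {n : ℕ∞} : ContDiff ℝ n (mgf X μ) := by
  have h' : AnalyticOnNhd ℝ (mgf X μ) univ := by simpa [h] using analyticOnNhd_mgf (X := X) (μ := μ)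
  exact h'.contDiff

theorem sq_iteratedDeriv_mgf_lt {ν : Measure ℝ} [NullSingletonClass ν] (hν : ν ≠ 0)
    (hpos : ∀ᵐ t ∂ν, 0 < t) (k : ℕ) {B : ℝ} (hB : B ∈ interior (integrableExpSet id ν)) :
    iteratedDeriv (k + 1) (mgf id ν) B ^ 2 <
      iteratedDeriv k (mgf id ν) B * iteratedDeriv (k + 2) (mgf id ν) B := by
  have hint (n : ℕ) : Integrable (fun t => t ^ n * exp (B * t)) ν :=
    integrable_pow_mul_exp_of_mem_interior_integrableExpSet hB n
  have hshift (n : ℕ) :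
      (fun t : ℝ => t ^ (k + n) * exp (B * t)) = fun t => t ^ n * (t ^ k * exp (B * t)) := by
    funext t; ring
  simp only [iteratedDeriv_mgf hB, id, hshift 1, hshift 2, pow_one]
  refine sq_integral_mul_lt_integral_mul_integral hν ?_ (hint k) ?_ ?_
  · filter_upwards [hpos] with t ht using by positivity
  · simpa only [hshift 1, pow_one] using hint (k + 1)
  · exact hshift 2 ▸ hint (k + 2)

theorem integrableOn_rpow_mul_exp_neg_sq_mul_exp {p : ℝ} (hp : -1 < p) (B : ℝ) :
    IntegrableOn (fun t => t ^ p * exp (-t ^ 2 / 2) * exp (B * t)) (Ioi 0) := by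
  have hGamma : IntegrableOn (fun t => exp ((B + 1) ^ 2 / 2) * (exp (-t) * t ^ (p + 1 - 1)))
      (Ioi 0) := (GammaIntegral_convergent (by linarith)).const_mul _
  refine hGamma.mono' (by fun_prop) ?_
  filter_upwards [ae_restrict_mem measurableSet_Ioi] with t (ht : 0 < t)
  have hexp : exp (-t ^ 2 / 2) * exp (B * t) ≤ exp ((B + 1) ^ 2 / 2) * exp (-t) := by
    rw [← exp_add, ← exp_add, exp_le_exp]
    nlinarith [sq_nonneg (t - (B + 1))]
  rw [add_sub_cancel_right, norm_of_nonneg (by positivity), mul_assoc]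
  calc t ^ p * (exp (-t ^ 2 / 2) * exp (B * t))
      ≤ t ^ p * (exp ((B + 1) ^ 2 / 2) * exp (-t)) := by gcongr
    _ = _ := by ring

/-- An unnormalised chi distribution with `p + 1` degrees of freedom. -/
noncomputable def chiMeasure (p : ℝ) : Measure ℝ :=
  (volume.restrict (Ioi 0)).withDensity fun t => ENNReal.ofReal (t ^ p * exp (-t ^ 2 / 2))

namespace chiMeasure

instance (p : ℝ) : NullSingletonClass (chiMeasure p) :=
  ⟨fun x => withDensity_absolutelyContinuous _ _ (measure_singleton x)⟩

theorem ae_pos (p : ℝ) : ∀ᵐ t ∂chiMeasure p, 0 < t :=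
  (withDensity_absolutelyContinuous _ _).ae_le (ae_restrict_mem measurableSet_Ioi)

theorem ne_zero (p : ℝ) : chiMeasure p ≠ 0 := by
  rw [chiMeasure, Ne, withDensity_eq_zero_iff (by fun_prop), Filter.EventuallyEq,
    ae_restrict_iff' measurableSet_Ioi]
  intro hzero
  have : volume (Ioi (0 : ℝ)) = 0 := by
    rw [measure_eq_zero_iff_ae_notMem]
    filter_upwards [hzero] with t ht (ht0 : 0 < t)
    exact (ENNReal.ofReal_pos.2 (by positivity)).ne' (ht ht0)
  simp at this

theorem integral_eq (p : ℝ) (g : ℝ → ℝ) :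
    ∫ t, g t ∂chiMeasure p = ∫ t in Ioi 0, t ^ p * exp (-t ^ 2 / 2) * g t := by
  rw [chiMeasure, integral_withDensity_eq_integral_toReal_smul (by fun_prop)
    (Filter.Eventually.of_forall fun _ => ENNReal.ofReal_lt_top)]
  refine setIntegral_congr_fun measurableSet_Ioi fun t (ht : 0 < t) => ?_
  rw [ENNReal.toReal_ofReal (by positivity), smul_eq_mul]

theorem integrableExpSet_id {p : ℝ} (hp : -1 < p) : integrableExpSet id (chiMeasure p) = univ := by
  refine eq_univ_of_forall fun B => ?_
  rw [integrableExpSet, mem_ofPred_eq, chiMeasure,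
    integrable_withDensity_iff_integrable_smul' (by fun_prop)
      (Filter.Eventually.of_forall fun _ => ENNReal.ofReal_lt_top)]
  refine (integrableOn_rpow_mul_exp_neg_sq_mul_exp hp B).congr_fun
    (fun t (ht : 0 < t) => ?_) measurableSet_Ioi
  rw [ENNReal.toReal_ofReal (by positivity), smul_eq_mul, id]

end chiMeasure

theorem Dcyl_eq_mgf (α x : ℝ) :
    Dcyl α x = exp (-x ^ 2 / 4) / Gamma (-α) * mgf id (chiMeasure (-α - 1)) (-x) := by
  rw [Dcyl, mgf, chiMeasure.integral_eq]
  congr 1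
  refine setIntegral_congr_fun measurableSet_Ioi fun t _ => ?_
  rw [mul_assoc, ← exp_add, id]
  ring_nf

theorem psi_eq_mgf (κ μ σ ρ : ℝ) (hκ : 0 < κ) (hσ : 0 < σ) :
    psi κ μ σ ρ = fun x =>
      (Gamma (ρ / κ))⁻¹ * mgf id (chiMeasure (ρ / κ - 1)) (√(2 * κ) / σ * (x - μ)) := by
  funext x
  have hexp : exp (κ * (x - μ) ^ 2 / (2 * σ ^ 2)) *
      exp (-(-((x - μ) / σ) * √(2 * κ)) ^ 2 / 4) = 1 := by
    rw [← exp_add, exp_eq_one_iff, neg_mul, neg_sq, mul_pow, div_pow, sq_sqrt (by positivity)]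
    field_simp
    ring
  have harg : -(-((x - μ) / σ) * √(2 * κ)) = √(2 * κ) / σ * (x - μ) := by ring
  rw [psi, Dcyl_eq_mgf, neg_neg, harg]
  linear_combination
    (Gamma (ρ / κ))⁻¹ * mgf id (chiMeasure (ρ / κ - 1)) (√(2 * κ) / σ * (x - μ)) * hexp

theorem iteratedDeriv_comp_mul_sub {f : ℝ → ℝ} {n : ℕ} (hf : ContDiff ℝ n f) (c a x : ℝ) :
    iteratedDeriv n (fun y => f (c * (y - a))) x = c ^ n * iteratedDeriv n f (c * (x - a)) := by
  rw [iteratedDeriv_comp_sub_const n (fun y => f (c * y)) a, iteratedDeriv_comp_const_mul hf]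

theorem iteratedDeriv_psi (κ μ σ ρ : ℝ) (hκ : 0 < κ) (hσ : 0 < σ) (hρ : 0 < ρ) (k : ℕ) (x : ℝ) :
    iteratedDeriv k (psi κ μ σ ρ) x = (Gamma (ρ / κ))⁻¹ * (√(2 * κ) / σ) ^ k *
      iteratedDeriv k (mgf id (chiMeasure (ρ / κ - 1))) (√(2 * κ) / σ * (x - μ)) := by
  have hset := chiMeasure.integrableExpSet_id (p := ρ / κ - 1) (by linarith [div_pos hρ hκ])
  rw [psi_eq_mgf κ μ σ ρ hκ hσ, iteratedDeriv_const_mul_field,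
    iteratedDeriv_comp_mul_sub (contDiff_mgf hset), mul_assoc]

/-- Log-convexity type inequality: `Q_k(z) = ψ^{(k)}ψ^{(k+2)} − (ψ^{(k+1)})² > 0`. -/
theorem stmt8 (κ σ ρ μ : ℝ) (hκ : 0 < κ) (hσ : 0 < σ) (hρ : 0 < ρ) :
    ∀ (k : ℕ) (z : ℝ),
      0 < iteratedDeriv k (psi κ μ σ ρ) z * iteratedDeriv (k + 2) (psi κ μ σ ρ) z
        - (iteratedDeriv (k + 1) (psi κ μ σ ρ) z) ^ 2 := by
  intro k z
  have hp : -1 < ρ / κ - 1 := by linarith [div_pos hρ hκ]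
  have hmgf := sq_iteratedDeriv_mgf_lt (chiMeasure.ne_zero (ρ / κ - 1)) (chiMeasure.ae_pos _) k
    (B := √(2 * κ) / σ * (z - μ)) (by simp [chiMeasure.integrableExpSet_id hp])
  have hscale : 0 < ((Gamma (ρ / κ))⁻¹ * (√(2 * κ) / σ) ^ (k + 1)) ^ 2 := by
    have := Gamma_pos_of_pos (div_pos hρ hκ)
    positivity
  simp only [iteratedDeriv_psi κ μ σ ρ hκ hσ hρ]
  linear_combination mul_pos hscale (sub_pos.2 hmgf)
end

section
/- With ψ as above and Q_k(z) = ψ^{(k)}(z)ψ^{(k+2)}(z) − (ψ^{(k+1)}(z))², the function Ψ_k(x) = (ψ^{(k+1)}(x))² / (ψ^{(k)}(x)ψ^{(k+2)}(x)) is strictly increasing on ℝ for every k ∈ ℕ₀. -/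
/-!
Substituting `b = √(2κ) (x - μ) / σ` turns `ψ` into a positive multiple of
`g_p(b) = ∫₀^∞ t^p e^{bt - t²/2} dt` with `p = ρ/κ - 1 > -1`. Since `g_p' = g_{p+1}`,
`ψ^{(k)}` is a positive multiple of `g_{p+k}`, so it suffices that `g_{p+1}² / (g_p g_{p+2})`
increases in `b`.

Integration by parts gives `g_{p+2} = (p+1) g_p + b g_{p+1}`, and every `g_q` vanishes at
`b = -∞`. Thanks to the recurrence, both `P = g_p g_{p+2} - g_{p+1}²` and the numerator `S` of
the derivative of the ratio satisfy differential inequalities `F' > A F` with `A ≤ 0` near `-∞`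
(for `S` this is `g_p g_{p+1} S' = 2 g_{p+2} P² + (2 g_{p+1}² - (p+1) g_p²) S` with `P > 0`).
Multiplied by the integrating factor `exp (-∫ A)` they become strictly increasing functions
with limit `0` at `-∞`, hence positive.
-/

open Set

open MeasureTheory Filter Topology

noncomputable def gaussMoment (p b : ℝ) : ℝ :=
  ∫ t in Ioi (0 : ℝ), t ^ p * Real.exp (b * t - t ^ 2 / 2)

lemma aestronglyMeasurable_gaussMoment_integrand (p b : ℝ) :
    AEStronglyMeasurable (fun t : ℝ => t ^ p * Real.exp (b * t - t ^ 2 / 2))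
      (volume.restrict (Ioi 0)) :=
  (by fun_prop : Measurable _).aestronglyMeasurable

lemma integrableOn_gaussMoment_integrand {p : ℝ} (hp : -1 < p) (b : ℝ) :
    IntegrableOn (fun t : ℝ => t ^ p * Real.exp (b * t - t ^ 2 / 2)) (Ioi 0) := by
  have hΓ := Real.GammaIntegral_convergent (by linarith : 0 < p + 1)
  rw [add_sub_cancel_right] at hΓ
  refine (hΓ.const_mul (Real.exp ((b + 1) ^ 2 / 2))).mono'
    (aestronglyMeasurable_gaussMoment_integrand p b) ?_
  filter_upwards [ae_restrict_mem measurableSet_Ioi] with t (ht : 0 < t)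
  have hexp : Real.exp (b * t - t ^ 2 / 2) ≤ Real.exp ((b + 1) ^ 2 / 2) * Real.exp (-t) := by
    rw [← Real.exp_add]
    exact Real.exp_le_exp.2 (by nlinarith [sq_nonneg (t - (b + 1))])
  rw [Real.norm_of_nonneg (by positivity)]
  calc t ^ p * Real.exp (b * t - t ^ 2 / 2)
      ≤ t ^ p * (Real.exp ((b + 1) ^ 2 / 2) * Real.exp (-t)) := by gcongr
    _ = _ := by ring

lemma gaussMoment_pos {p : ℝ} (hp : -1 < p) (b : ℝ) : 0 < gaussMoment p b := by
  have hsupp : Function.support (fun t : ℝ => t ^ p * Real.exp (b * t - t ^ 2 / 2)) ∩ Ioi 0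
      = Ioi 0 :=
    inter_eq_right.2 fun t (ht : 0 < t) => Function.mem_support.2 (by positivity)
  rw [gaussMoment, setIntegral_pos_iff_support_of_nonneg_ae _
    (integrableOn_gaussMoment_integrand hp b), hsupp]
  · simp
  · filter_upwards [ae_restrict_mem measurableSet_Ioi] with t (ht : 0 < t)
    positivity

lemma hasDerivAt_gaussMoment {p : ℝ} (hp : -1 < p) (b : ℝ) :
    HasDerivAt (gaussMoment p) (gaussMoment (p + 1) b) b := by
  have h_bound : ∀ᵐ t ∂(volume.restrict (Ioi (0 : ℝ))), ∀ x ∈ Metric.ball b 1,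
      ‖t ^ (p + 1) * Real.exp (x * t - t ^ 2 / 2)‖
        ≤ t ^ (p + 1) * Real.exp ((b + 1) * t - t ^ 2 / 2) := by
    filter_upwards [ae_restrict_mem measurableSet_Ioi] with t (ht : 0 < t) x hx
    have hxb : x ≤ b + 1 := by
      linarith [(abs_lt.1 (Real.dist_eq x b ▸ Metric.mem_ball.1 hx)).2]
    rw [Real.norm_of_nonneg (by positivity)]
    gcongr
  have h_diff : ∀ᵐ t ∂(volume.restrict (Ioi (0 : ℝ))), ∀ x ∈ Metric.ball b 1,
      HasDerivAt (fun x => t ^ p * Real.exp (x * t - t ^ 2 / 2))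
        (t ^ (p + 1) * Real.exp (x * t - t ^ 2 / 2)) x := by
    filter_upwards [ae_restrict_mem measurableSet_Ioi] with t (ht : 0 < t) x _
    refine (((hasDerivAt_mul_const t).sub_const (t ^ 2 / 2)).exp.const_mul (t ^ p)).congr_deriv ?_
    rw [Real.rpow_add_one ht.ne']
    ring
  exact (hasDerivAt_integral_of_dominated_loc_of_deriv_le (Metric.ball_mem_nhds b one_pos)
    (Eventually.of_forall fun x => aestronglyMeasurable_gaussMoment_integrand p x)
    (integrableOn_gaussMoment_integrand hp b) (aestronglyMeasurable_gaussMoment_integrand _ b)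
    h_bound (integrableOn_gaussMoment_integrand (by linarith) (b + 1)) h_diff).2

lemma continuous_gaussMoment {p : ℝ} (hp : -1 < p) : Continuous (gaussMoment p) :=
  continuous_iff_continuousAt.2 fun b => (hasDerivAt_gaussMoment hp b).continuousAt

lemma tendsto_rpow_mul_exp_sub_sq_atTop (p b : ℝ) :
    Tendsto (fun t : ℝ => t ^ p * Real.exp (b * t - t ^ 2 / 2)) atTop (𝓝 0) := by
  refine tendsto_of_tendsto_of_tendsto_of_le_of_le' tendsto_const_nhds
    (by simpa using tendsto_rpow_mul_exp_neg_mul_atTop_nhds_zero p 1 one_pos) ?_ ?_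
  · filter_upwards [eventually_gt_atTop 0] with t ht
    positivity
  · filter_upwards [eventually_gt_atTop 0, eventually_ge_atTop (2 * (b + 1))] with t ht hbt
    gcongr
    nlinarith

lemma tendsto_gaussMoment_atBot {p : ℝ} (hp : -1 < p) :
    Tendsto (gaussMoment p) atBot (𝓝 0) := by
  unfold gaussMoment
  have h := tendsto_integral_filter_of_dominated_convergence (μ := volume.restrict (Ioi (0 : ℝ)))
    (l := atBot) (F := fun b t => t ^ p * Real.exp (b * t - t ^ 2 / 2)) (f := fun _ => 0)
    (fun t => t ^ p * Real.exp (0 * t - t ^ 2 / 2))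
    (Eventually.of_forall fun b => aestronglyMeasurable_gaussMoment_integrand p b) ?_
    (integrableOn_gaussMoment_integrand hp 0) ?_
  · simpa using h
  · filter_upwards [eventually_le_atBot 0] with b hb
    filter_upwards [ae_restrict_mem measurableSet_Ioi] with t (ht : 0 < t)
    rw [Real.norm_of_nonneg (by positivity)]
    gcongr
  · filter_upwards [ae_restrict_mem measurableSet_Ioi] with t (ht : 0 < t)
    have h := tendsto_atBot_add_const_right _ (-(t ^ 2 / 2)) (tendsto_id.atBot_mul_const ht)
    simpa [sub_eq_add_neg] using (Real.tendsto_exp_atBot.comp h).const_mul (t ^ p)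

lemma gaussMoment_add_two {p : ℝ} (hp : -1 < p) (b : ℝ) :
    gaussMoment (p + 2) b = (p + 1) * gaussMoment p b + b * gaussMoment (p + 1) b := by
  have hp1 : 0 < p + 1 := by linarith
  have hint := fun q (hq : -1 < q) => integrableOn_gaussMoment_integrand hq b
  have hderiv : ∀ t ∈ Ioi (0 : ℝ),
      HasDerivAt (fun t => t ^ (p + 1) * Real.exp (b * t - t ^ 2 / 2))
      ((p + 1) * (t ^ p * Real.exp (b * t - t ^ 2 / 2))
        + b * (t ^ (p + 1) * Real.exp (b * t - t ^ 2 / 2))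
        - t ^ (p + 2) * Real.exp (b * t - t ^ 2 / 2)) t := by
    intro t (ht : 0 < t)
    have hexp := (((hasDerivAt_id' t).const_mul b).fun_sub ((hasDerivAt_pow 2 t).div_const 2)).exp
    refine ((Real.hasDerivAt_rpow_const (p := p + 1) (Or.inl ht.ne')).fun_mul hexp).congr_deriv ?_
    rw [add_sub_cancel_right, Real.rpow_add ht, Real.rpow_add ht, Real.rpow_one, Real.rpow_two]
    ring
  have i0 := (hint p hp).const_mul (p + 1)
  have i1 := (hint (p + 1) (by linarith)).const_mul b
  have i2 := hint (p + 2) (by linarith)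
  have hFTC := integral_Ioi_of_hasDerivAt_of_tendsto
    (f := fun t => t ^ (p + 1) * Real.exp (b * t - t ^ 2 / 2))
    ((Real.continuousAt_rpow_const 0 (p + 1) (Or.inr hp1.le)).mul (by fun_prop :
      ContinuousAt (fun t : ℝ => Real.exp (b * t - t ^ 2 / 2)) 0)).continuousWithinAt
    hderiv ((i0.fun_add i1).sub i2) (tendsto_rpow_mul_exp_sub_sq_atTop (p + 1) b)
  rw [integral_sub (i0.fun_add i1) i2, integral_add i0 i1, integral_const_mul, integral_const_mul,
    Real.zero_rpow hp1.ne', zero_mul] at hFTC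
  simp only [gaussMoment]
  linarith

lemma pos_of_hasDerivAt_of_mul_lt {S S' A : ℝ → ℝ} (hA : Continuous A)
    (hA_nonpos : ∀ᶠ b in atBot, A b ≤ 0) (hS : ∀ b, HasDerivAt S (S' b) b)
    (hS' : ∀ b, A b * S b < S' b) (hS_lim : Tendsto S atBot (𝓝 0)) (b : ℝ) : 0 < S b := by
  obtain ⟨c, hc⟩ := eventually_atBot.1 hA_nonpos
  let W : ℝ → ℝ := fun x => ∫ t in c..x, A t
  have hW : ∀ x, HasDerivAt W (A x) x := fun x => (hA.integral_hasStrictDerivAt c x).hasDerivAt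
  have hW_nonneg : ∀ x ≤ c, 0 ≤ W x := fun x hx => by
    have h : 0 ≤ ∫ t in x..c, -A t :=
      intervalIntegral.integral_nonneg hx fun t ht => neg_nonneg.2 (hc t ht.2)
    rwa [intervalIntegral.integral_neg, ← intervalIntegral.integral_symm] at h
  -- `S e^{-W}` is strictly increasing because `W' = A`.
  have hY : StrictMono fun x => S x * Real.exp (-W x) := by
    refine strictMono_of_hasDerivAt_pos (fun x => (hS x).fun_mul (hW x).fun_neg.exp) fun x => ?_
    nlinarith [mul_pos (sub_pos.2 (hS' x)) (Real.exp_pos (-W x))]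
  have hY_lim : Tendsto (fun x => S x * Real.exp (-W x)) atBot (𝓝 0) := by
    refine squeeze_zero_norm' ?_ (by simpa using hS_lim.norm)
    filter_upwards [eventually_le_atBot c] with x hx
    rw [norm_mul, Real.norm_of_nonneg (Real.exp_pos _).le]
    exact mul_le_of_le_one_right (norm_nonneg _)
      (Real.exp_le_one_iff.2 (by linarith [hW_nonneg x hx]))
  have hYb : 0 < S b * Real.exp (-W b) :=
    (le_of_tendsto hY_lim (by
      filter_upwards [eventually_le_atBot (b - 1)] with x hx
      exact hY.monotone hx)).trans_lt (hY (by linarith : b - 1 < b))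
  exact pos_of_mul_pos_left hYb (Real.exp_pos _).le

lemma sq_gaussMoment_lt {p : ℝ} (hp : -1 < p) (b : ℝ) :
    gaussMoment (p + 1) b ^ 2 < gaussMoment p b * gaussMoment (p + 2) b := by
  have d0 := hasDerivAt_gaussMoment hp
  have d1 := hasDerivAt_gaussMoment (by linarith : -1 < p + 1)
  have d2 := hasDerivAt_gaussMoment (by linarith : -1 < p + 2)
  have r1 := gaussMoment_add_two hp
  have r2 := gaussMoment_add_two (by linarith : -1 < p + 1)
  norm_num [add_assoc] at d1 d2 r2
  suffices 0 < gaussMoment p b * gaussMoment (p + 2) b - gaussMoment (p + 1) b ^ 2 by linarith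
  refine pos_of_hasDerivAt_of_mul_lt continuous_id (eventually_le_atBot 0)
    (fun x => ((d0 x).fun_mul (d2 x)).fun_sub ((d1 x).fun_pow 2)) (fun x => ?_) ?_ b
  · -- by the recurrence, `P' - x P = g_p g_{p+1}` for `P = g_p g_{p+2} - g_{p+1}²`
    have h0 := gaussMoment_pos hp x
    have h1 := gaussMoment_pos (by linarith : -1 < p + 1) x
    norm_num
    rw [r2 x, r1 x]
    nlinarith [mul_pos h0 h1]
  · simpa using ((tendsto_gaussMoment_atBot hp).mul
      (tendsto_gaussMoment_atBot (by linarith))).sub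
      ((tendsto_gaussMoment_atBot (by linarith : -1 < p + 1)).pow 2)

lemma two_mul_sq_gaussMoment_lt {p : ℝ} (hp : -1 < p) {b : ℝ} (hb : b ≤ -(p + 2)) :
    2 * gaussMoment (p + 1) b ^ 2 < (p + 1) * gaussMoment p b ^ 2 := by
  have hY := gaussMoment_pos hp b
  have hX := gaussMoment_pos (by linarith : -1 < p + 1) b
  have hP := sq_gaussMoment_lt hp b
  rw [gaussMoment_add_two hp] at hP
  set X := gaussMoment (p + 1) b
  set Y := gaussMoment p b
  have h1 : (p + 2) * X < (p + 1) * Y := by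
    refine lt_of_mul_lt_mul_left ?_ hY.le
    nlinarith [mul_pos hX hY]
  have h2 : ((p + 2) * X) ^ 2 < ((p + 1) * Y) ^ 2 := by
    gcongr
    nlinarith
  nlinarith [sq_nonneg (p + 1), sq_nonneg X]

/-- `g_{p+1}` times this is the numerator of the derivative of `g_{p+1}² / (g_p g_{p+2})`. -/
noncomputable def ratioDerivNumerator (p b : ℝ) : ℝ :=
  2 * gaussMoment p b * gaussMoment (p + 2) b ^ 2
    - gaussMoment (p + 1) b ^ 2 * gaussMoment (p + 2) b
    - gaussMoment p b * gaussMoment (p + 1) b * gaussMoment (p + 3) b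

lemma hasDerivAt_ratioDerivNumerator {p : ℝ} (hp : -1 < p) (b : ℝ) :
    HasDerivAt (ratioDerivNumerator p)
      ((2 * gaussMoment (p + 2) b
          * (gaussMoment p b * gaussMoment (p + 2) b - gaussMoment (p + 1) b ^ 2) ^ 2
        + (2 * gaussMoment (p + 1) b ^ 2 - (p + 1) * gaussMoment p b ^ 2)
          * ratioDerivNumerator p b) / (gaussMoment p b * gaussMoment (p + 1) b)) b := by
  have d0 := hasDerivAt_gaussMoment hp b
  have d1 := hasDerivAt_gaussMoment (by linarith : -1 < p + 1) b
  have d2 := hasDerivAt_gaussMoment (by linarith : -1 < p + 2) b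
  have d3 := hasDerivAt_gaussMoment (by linarith : -1 < p + 3) b
  have r1 := gaussMoment_add_two hp b
  have r2 := gaussMoment_add_two (by linarith : -1 < p + 1) b
  have r3 := gaussMoment_add_two (by linarith : -1 < p + 2) b
  norm_num [add_assoc] at d1 d2 d3 r2 r3
  have hne : gaussMoment p b * gaussMoment (p + 1) b ≠ 0 :=
    (mul_pos (gaussMoment_pos hp b) (gaussMoment_pos (by linarith) b)).ne'
  refine (((d0.fun_mul (d2.fun_pow 2)).const_mul 2 |>.fun_sub ((d1.fun_pow 2).fun_mul d2)).fun_sub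
    ((d0.fun_mul d1).fun_mul d3)).congr_of_eventuallyEq ?_ |>.congr_deriv ?_
  · exact Eventually.of_forall fun x => by simp only [ratioDerivNumerator]; ring
  · rw [eq_div_iff hne, ratioDerivNumerator, r3, r2, r1]
    push_cast
    ring

lemma ratioDerivNumerator_pos {p : ℝ} (hp : -1 < p) (b : ℝ) : 0 < ratioDerivNumerator p b := by
  have h0 := gaussMoment_pos hp
  have h1 := gaussMoment_pos (by linarith : -1 < p + 1)
  have h2 := gaussMoment_pos (by linarith : -1 < p + 2)
  have hP := sq_gaussMoment_lt hp
  refine pos_of_hasDerivAt_of_mul_lt (A := fun x =>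
      (2 * gaussMoment (p + 1) x ^ 2 - (p + 1) * gaussMoment p x ^ 2)
        / (gaussMoment p x * gaussMoment (p + 1) x)) ?_ ?_
    (hasDerivAt_ratioDerivNumerator hp) (fun x => ?_) ?_ b
  · exact ((continuous_const.mul ((continuous_gaussMoment (by linarith)).pow 2)).sub
      (continuous_const.mul ((continuous_gaussMoment hp).pow 2))).div
      ((continuous_gaussMoment hp).mul (continuous_gaussMoment (by linarith)))
      fun x => (mul_pos (h0 x) (h1 x)).ne'
  · filter_upwards [eventually_le_atBot (-(p + 2))] with x hx
    exact div_nonpos_of_nonpos_of_nonneg (by linarith [two_mul_sq_gaussMoment_lt hp hx])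
      (mul_pos (h0 x) (h1 x)).le
  · rw [add_div, div_mul_eq_mul_div, lt_add_iff_pos_left]
    exact div_pos (mul_pos (mul_pos two_pos (h2 x)) (pow_pos (sub_pos.2 (hP x)) 2))
      (mul_pos (h0 x) (h1 x))
  · have t0 := tendsto_gaussMoment_atBot hp
    have t1 := tendsto_gaussMoment_atBot (by linarith : -1 < p + 1)
    have t2 := tendsto_gaussMoment_atBot (by linarith : -1 < p + 2)
    have t3 := tendsto_gaussMoment_atBot (by linarith : -1 < p + 3)
    unfold ratioDerivNumerator
    simpa [mul_assoc] using
      (((t0.mul (t2.pow 2)).const_mul 2).sub ((t1.pow 2).mul t2)).sub ((t0.mul t1).mul t3)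

lemma strictMono_gaussMoment_ratio {p : ℝ} (hp : -1 < p) :
    StrictMono fun b => gaussMoment (p + 1) b ^ 2 / (gaussMoment p b * gaussMoment (p + 2) b) := by
  have h0 := gaussMoment_pos hp
  have h1 := gaussMoment_pos (by linarith : -1 < p + 1)
  have h2 := gaussMoment_pos (by linarith : -1 < p + 2)
  have d0 := hasDerivAt_gaussMoment hp
  have d1 := hasDerivAt_gaussMoment (by linarith : -1 < p + 1)
  have d2 := hasDerivAt_gaussMoment (by linarith : -1 < p + 2)
  norm_num [add_assoc] at d1 d2
  refine strictMono_of_hasDerivAt_pos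
    (fun b => ((d1 b).fun_pow 2).fun_div ((d0 b).fun_mul (d2 b)) (mul_pos (h0 b) (h2 b)).ne')
    fun b => div_pos ?_ (pow_pos (mul_pos (h0 b) (h2 b)) 2)
  convert mul_pos (h1 b) (ratioDerivNumerator_pos hp b) using 1
  rw [ratioDerivNumerator]
  push_cast
  ring

lemma psi_eq_gaussMoment {κ : ℝ} (μ σ ρ : ℝ) (hκ : 0 < κ) :
    psi κ μ σ ρ = fun x => (Real.Gamma (ρ / κ))⁻¹
      * gaussMoment (ρ / κ - 1) (Real.sqrt (2 * κ) / σ * (x - μ)) := by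
  funext x
  have hs : Real.sqrt (2 * κ) ^ 2 = 2 * κ := Real.sq_sqrt (by linarith)
  -- the Gaussian prefactors of `psi` and of `Dcyl` cancel
  have hexp : Real.exp (κ * (x - μ) ^ 2 / (2 * σ ^ 2))
      * Real.exp (-(-((x - μ) / σ) * Real.sqrt (2 * κ)) ^ 2 / 4) = 1 := by
    rw [← Real.exp_add, Real.exp_eq_one_iff, neg_mul, neg_sq, mul_pow, hs]
    ring
  simp only [psi, Dcyl, gaussMoment, neg_neg, div_eq_inv_mul (Real.exp _)]
  rw [← mul_assoc, ← mul_assoc, mul_comm _ (Real.Gamma _)⁻¹, mul_assoc _ _ (Real.exp _),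
    hexp]
  simp only [mul_one]
  congr 1
  refine setIntegral_congr_fun measurableSet_Ioi fun t _ => ?_
  ring_nf

lemma iteratedDeriv_const_mul_gaussMoment {q : ℝ} (hq : -1 < q) (c a μ : ℝ) (k : ℕ) :
    iteratedDeriv k (fun x => c * gaussMoment q (a * (x - μ)))
      = fun x => c * a ^ k * gaussMoment (q + k) (a * (x - μ)) := by
  induction k with
  | zero => simp
  | succ k ih =>
    rw [iteratedDeriv_succ, ih]
    funext x
    have hk : -1 < q + k := by linarith [(Nat.cast_nonneg k : (0 : ℝ) ≤ k)]
    have hd : HasDerivAt (fun x => c * a ^ k * gaussMoment (q + k) (a * (x - μ)))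
        (c * a ^ k * (gaussMoment (q + k + 1) (a * (x - μ)) * (a * 1))) x :=
      ((hasDerivAt_gaussMoment hk _).comp x
        (((hasDerivAt_id' x).sub_const μ).const_mul a)).const_mul _
    rw [hd.deriv, Nat.cast_succ, ← add_assoc]
    ring

/-- The ratio `Ψ_k(x) = (ψ^{(k+1)}(x))² / (ψ^{(k)}(x)ψ^{(k+2)}(x))` is strictly
increasing on `ℝ` for every `k`. -/
theorem stmt9 (κ σ ρ μ : ℝ) (hκ : 0 < κ) (hσ : 0 < σ) (hρ : 0 < ρ) :
    ∀ k : ℕ,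
      StrictMono fun x : ℝ =>
        (iteratedDeriv (k + 1) (psi κ μ σ ρ) x) ^ 2 /
          (iteratedDeriv k (psi κ μ σ ρ) x * iteratedDeriv (k + 2) (psi κ μ σ ρ) x) := by
  intro k
  have hq : -1 < ρ / κ - 1 := by linarith [div_pos hρ hκ]
  have hp : -1 < ρ / κ - 1 + k := by linarith [(Nat.cast_nonneg k : (0 : ℝ) ≤ k)]
  have ha : 0 < Real.sqrt (2 * κ) / σ := by positivity
  have hc : (Real.Gamma (ρ / κ))⁻¹ ≠ 0 :=
    (inv_pos.2 (Real.Gamma_pos_of_pos (div_pos hρ hκ))).ne'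
  have hx : StrictMono fun x => Real.sqrt (2 * κ) / σ * (x - μ) :=
    fun x y hxy => mul_lt_mul_of_pos_left (sub_lt_sub_right hxy μ) ha
  convert (strictMono_gaussMoment_ratio hp).comp hx using 1
  funext x
  simp only [psi_eq_gaussMoment μ σ ρ hκ, iteratedDeriv_const_mul_gaussMoment hq,
    Function.comp_apply]
  push_cast
  field_simp
  ring_nf
end
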